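/- arXiv:2211.02298 — 5 statements merged into one kernel-verified Lean document; each statement's English description precedes it below -/
import Mathlib

section
/- Let X be a Banach space and D ⊆ X a closed convex set. The hyperspace of all nonempty bounded closed convex subsets of D, equipped with the Hausdorff distance and the family of metric segments given by [A,B] = {λA + (1−λ)B : λ ∈ [0,1]}, is a complete hyperbolic metric space. -/
open Metric Set Pointwise Filter

variable {X : Type*} [NormedAddCommGroup X] [NormedSpace ℝ X]

/-- Membership in the hyperspace `𝒞ℬ(D)` of nonempty bounded closed convex subsets of `D`. -/
def MemCB (D A : Set X) : Prop :=
  A.Nonempty ∧ Bornology.IsBounded A ∧ IsClosed A ∧ Convex ℝ A ∧ A ⊆ D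

/-- The convex combination `λA + (1−λ)B` of two sets, i.e. the closure of the set of
convex combinations `λx + (1−λ)y`, `x ∈ A`, `y ∈ B`. -/
noncomputable def comb (l : ℝ) (A B : Set X) : Set X :=
  closure (l • A + (1 - l) • B)

/-!
The Hausdorff distance is subadditive under Minkowski sums and scales with nonnegative scalar
multiplication, so `H(tA + (1-t)B, tW + (1-t)Z) ≤ t H(A,W) + (1-t) H(B,Z)`: this is the
hyperbolicity inequality. For `μ ≤ λ`, the sets `λA + (1-λ)B` and `μA + (1-μ)B` share the summand
`μA + (1-λ)B` (by convexity) and differ by `(λ-μ)A` versus `(λ-μ)B`, which bounds their distance by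
`(λ-μ) H(A,B)`; the triangle inequality along `A, λA + (1-λ)B, μA + (1-μ)B, B` then forces
equality. Completeness is inherited from the space of closed sets with the Hausdorff
edistance, since nonemptiness, boundedness, convexity and lying in `D` survive Hausdorff limits.
-/

open Topology

section Minkowski

variable {E : Type*} [SeminormedAddCommGroup E]

theorem infEDist_add_add_le (x y : E) (s t : Set E) :
    infEDist (x + y) (s + t) ≤ infEDist x s + infEDist y t :=
  calc infEDist (x + y) (s + t) ≤ ⨅ b ∈ t, ⨅ a ∈ s, edist x a + edist y b :=
        le_iInf₂ fun b hb => le_iInf₂ fun a ha =>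
          (infEDist_le_edist_of_mem (add_mem_add ha hb)).trans (edist_add_add_le _ _ _ _)
    _ = infEDist x s + infEDist y t := by
        simp only [infEDist, ENNReal.iInf_add, ENNReal.add_iInf]

theorem hausdorffEDist_add_add_le (s₁ s₂ t₁ t₂ : Set E) :
    hausdorffEDist (s₁ + s₂) (t₁ + t₂) ≤ hausdorffEDist s₁ t₁ + hausdorffEDist s₂ t₂ := by
  refine hausdorffEDist_le_of_infEDist ?_ ?_ <;> rintro _ ⟨x, hx, y, hy, rfl⟩
  · exact (infEDist_add_add_le x y t₁ t₂).trans
      (add_le_add (infEDist_le_hausdorffEDist_of_mem hx) (infEDist_le_hausdorffEDist_of_mem hy))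
  · rw [hausdorffEDist_comm (s := s₁), hausdorffEDist_comm (s := s₂)]
    exact (infEDist_add_add_le x y s₁ s₂).trans
      (add_le_add (infEDist_le_hausdorffEDist_of_mem hx) (infEDist_le_hausdorffEDist_of_mem hy))

-- Without finiteness this fails for `c = 0`, `s = ∅ ≠ t`: then `{0}` and `∅` are at distance `⊤`.
theorem hausdorffEDist_smul_le {𝕜 : Type*} [NormedDivisionRing 𝕜] [Module 𝕜 E] [NormSMulClass 𝕜 E]
    (c : 𝕜) {s t : Set E} (h : hausdorffEDist s t ≠ ⊤) :
    hausdorffEDist (c • s) (c • t) ≤ ‖c‖₊ • hausdorffEDist s t := by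
  obtain rfl | hc := eq_or_ne c 0
  · rcases empty_or_nonempty_of_hausdorffEDist_ne_top h with ⟨rfl, rfl⟩ | ⟨hs, ht⟩
    · simp
    · simp [zero_smul_set hs, zero_smul_set ht]
  refine hausdorffEDist_le_of_infEDist ?_ ?_ <;> rintro _ ⟨x, hx, rfl⟩ <;>
    rw [infEDist_smul₀ hc] <;> gcongr
  · exact infEDist_le_hausdorffEDist_of_mem hx
  · rw [hausdorffEDist_comm]
    exact infEDist_le_hausdorffEDist_of_mem hx

theorem hausdorffDist_smul_add_smul_le [NormedSpace ℝ E] {s₁ s₂ t₁ t₂ : Set E}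
    (h₁ : hausdorffEDist s₁ t₁ ≠ ⊤) (h₂ : hausdorffEDist s₂ t₂ ≠ ⊤) {a b : ℝ} (ha : 0 ≤ a)
    (hb : 0 ≤ b) :
    hausdorffDist (a • s₁ + b • s₂) (a • t₁ + b • t₂) ≤
      a * hausdorffDist s₁ t₁ + b * hausdorffDist s₂ t₂ := by
  have hnn₁ := mul_nonneg ha (hausdorffDist_nonneg (s := s₁) (t := t₁))
  have hnn₂ := mul_nonneg hb (hausdorffDist_nonneg (s := s₂) (t := t₂))
  refine ENNReal.toReal_le_of_le_ofReal (add_nonneg hnn₁ hnn₂) ?_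
  calc hausdorffEDist (a • s₁ + b • s₂) (a • t₁ + b • t₂)
      ≤ hausdorffEDist (a • s₁) (a • t₁) + hausdorffEDist (b • s₂) (b • t₂) :=
        hausdorffEDist_add_add_le _ _ _ _
    _ ≤ ‖a‖₊ • hausdorffEDist s₁ t₁ + ‖b‖₊ • hausdorffEDist s₂ t₂ :=
        add_le_add (hausdorffEDist_smul_le a h₁) (hausdorffEDist_smul_le b h₂)
    _ = ENNReal.ofReal (a * hausdorffDist s₁ t₁ + b * hausdorffDist s₂ t₂) := by
        rw [ENNReal.ofReal_add hnn₁ hnn₂, ENNReal.ofReal_mul ha, ENNReal.ofReal_mul hb,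
          hausdorffDist, hausdorffDist, ENNReal.ofReal_toReal h₁, ENNReal.ofReal_toReal h₂,
          ← Real.enorm_eq_ofReal ha, ← Real.enorm_eq_ofReal hb]
        rfl

theorem dist_smul_add_smul_le [NormedSpace ℝ E] {a b : ℝ} (ha : 0 ≤ a) (hb : 0 ≤ b)
    (x y x' y' : E) : dist (a • x + b • y) (a • x' + b • y') ≤ a * dist x x' + b * dist y y' :=
  (dist_add_add_le _ _ _ _).trans_eq <| by
    rw [dist_smul₀, dist_smul₀, Real.norm_of_nonneg ha, Real.norm_of_nonneg hb]

end Minkowski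

theorem Bornology.IsBounded.of_hausdorffEDist_ne_top {E : Type*} [PseudoMetricSpace E]
    {s t : Set E} (hs : Bornology.IsBounded s) (h : hausdorffEDist s t ≠ ⊤) :
    Bornology.IsBounded t := by
  refine (hs.cthickening (δ := hausdorffDist t s)).subset fun x hx => ?_
  rw [mem_cthickening_iff, hausdorffDist, ENNReal.ofReal_toReal (by rwa [hausdorffEDist_comm])]
  exact infEDist_le_hausdorffEDist_of_mem hx

namespace TopologicalSpace.Closeds

variable {E : Type*} [NormedAddCommGroup E]

theorem cauchySeq_of_hausdorffDist {F : ℕ → Closeds E}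
    (hfin : ∀ m n, hausdorffEDist (F m : Set E) (F n) ≠ ⊤)
    (hF : ∀ ε > (0 : ℝ), ∃ N, ∀ m ≥ N, ∀ n ≥ N, hausdorffDist (F m : Set E) (F n) < ε) :
    CauchySeq F := by
  refine EMetric.cauchySeq_iff.2 fun ε hε => ?_
  obtain ⟨r, -, hr, hrε⟩ := ENNReal.lt_iff_exists_real_btwn.1 hε
  obtain ⟨N, hN⟩ := hF r (ENNReal.ofReal_pos.1 hr)
  refine ⟨N, fun m hm n hn => lt_of_lt_of_le ?_ hrε.le⟩
  rw [edist_eq, ← ENNReal.ofReal_toReal (hfin m n)]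
  exact (ENNReal.ofReal_lt_ofReal_iff (ENNReal.ofReal_pos.1 hr)).2 (hN m hm n hn)

theorem isClosed_setOf_convex [NormedSpace ℝ E] :
    IsClosed {t : Closeds E | Convex ℝ (t : Set E)} := by
  refine isClosed_of_closure_subset fun t ht x hx y hy a b ha hb hab => ?_
  rw [← t.isClosed.closure_eq, Metric.mem_closure_iff]
  intro ε hε
  obtain ⟨K, hK, htK⟩ := EMetric.mem_closure_iff.1 ht _ (ENNReal.ofReal_pos.2 (half_pos hε))
  obtain ⟨x', hx', hxx'⟩ := exists_edist_lt_of_hausdorffEDist_lt hx htK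
  obtain ⟨y', hy', hyy'⟩ := exists_edist_lt_of_hausdorffEDist_lt hy htK
  rw [edist_comm] at htK
  obtain ⟨z, hz, hz'⟩ := exists_edist_lt_of_hausdorffEDist_lt (hK hx' hy' ha hb hab) htK
  rw [edist_lt_ofReal] at hxx' hyy' hz'
  have hcombo : a * dist x x' + b * dist y y' ≤ ε / 2 :=
    calc _ ≤ a * (ε / 2) + b * (ε / 2) := by gcongr
      _ = ε / 2 := by rw [← add_mul, hab, one_mul]
  refine ⟨z, hz, ?_⟩
  calc dist (a • x + b • y) z
      ≤ dist (a • x + b • y) (a • x' + b • y') + dist (a • x' + b • y') z := dist_triangle _ _ _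
    _ < ε / 2 + ε / 2 :=
        add_lt_add_of_le_of_lt ((dist_smul_add_smul_le ha hb _ _ _ _).trans hcombo) hz'
    _ = ε := add_halves ε

end TopologicalSpace.Closeds

theorem closure_closure_add_closure {M : Type*} [TopologicalSpace M] [Add M] [ContinuousAdd M]
    (s t : Set M) : closure (closure s + closure t) = closure (s + t) := by
  refine Subset.antisymm (closure_minimal ?_ isClosed_closure)
    (closure_mono (add_subset_add subset_closure subset_closure))
  rintro _ ⟨a, ha, b, hb, rfl⟩
  exact map_mem_closure₂ continuous_add ha hb fun x hx y hy => add_mem_add hx hy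

section Hyperspace

variable {D A B W Z : Set X}

theorem MemCB.hausdorffEDist_ne_top (hA : MemCB D A) (hB : MemCB D B) :
    hausdorffEDist A B ≠ ⊤ :=
  hausdorffEDist_ne_top_of_nonempty_of_bounded hA.1 hB.1 hA.2.1 hB.2.1

theorem comb_one (hA : IsClosed A) (hB : B.Nonempty) : comb 1 A B = A := by
  rw [comb, one_smul, sub_self, zero_smul_set hB, add_zero, hA.closure_eq]

theorem comb_zero (hA : A.Nonempty) (hB : IsClosed B) : comb 0 A B = B := by
  rw [comb, zero_smul_set hA, sub_zero, one_smul, zero_add, hB.closure_eq]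

theorem Set.Nonempty.comb (hA : A.Nonempty) (hB : B.Nonempty) (l : ℝ) : (comb l A B).Nonempty :=
  (hA.smul_set.add hB.smul_set).closure

theorem Bornology.IsBounded.comb (hA : Bornology.IsBounded A) (hB : Bornology.IsBounded B)
    (l : ℝ) : Bornology.IsBounded (comb l A B) :=
  ((hA.smul₀ l).add (hB.smul₀ (1 - l))).closure

theorem Convex.comb (hA : Convex ℝ A) (hB : Convex ℝ B) (l : ℝ) : Convex ℝ (comb l A B) :=
  ((hA.smul l).add (hB.smul (1 - l))).closure

theorem comb_subset (hDcl : IsClosed D) (hDco : Convex ℝ D) (hA : A ⊆ D) (hB : B ⊆ D) {l : ℝ}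
    (hl : l ∈ Icc (0 : ℝ) 1) : comb l A B ⊆ D := by
  rw [comb, hDcl.closure_subset_iff]
  rintro _ ⟨_, ⟨a, ha, rfl⟩, _, ⟨b, hb, rfl⟩, rfl⟩
  exact hDco (hA ha) (hB hb) hl.1 (sub_nonneg.2 hl.2) (add_sub_cancel l 1)

theorem MemCB.comb (hDcl : IsClosed D) (hDco : Convex ℝ D) (hA : MemCB D A) (hB : MemCB D B)
    {l : ℝ} (hl : l ∈ Icc (0 : ℝ) 1) : MemCB D (comb l A B) :=
  ⟨hA.1.comb hB.1 l, hA.2.1.comb hB.2.1 l, isClosed_closure, hA.2.2.2.1.comb hB.2.2.2.1 l,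
    comb_subset hDcl hDco hA.2.2.2.2 hB.2.2.2.2 hl⟩

theorem hausdorffDist_comb_comb_le (hAW : hausdorffEDist A W ≠ ⊤) (hBZ : hausdorffEDist B Z ≠ ⊤)
    {t : ℝ} (ht : t ∈ Icc (0 : ℝ) 1) :
    hausdorffDist (comb t A B) (comb t W Z) ≤
      t * hausdorffDist A W + (1 - t) * hausdorffDist B Z := by
  rw [comb, comb, hausdorffDist_closure]
  exact hausdorffDist_smul_add_smul_le hAW hBZ ht.1 (sub_nonneg.2 ht.2)

theorem hausdorffDist_comb_le_of_le (hA : Convex ℝ A) (hB : Convex ℝ B)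
    (hAB : hausdorffEDist A B ≠ ⊤) {l m : ℝ} (hm : 0 ≤ m) (hml : m ≤ l) (hl : l ≤ 1) :
    hausdorffDist (comb l A B) (comb m A B) ≤ (l - m) * hausdorffDist A B := by
  set K := m • A + (1 - l) • B
  have hlK : l • A + (1 - l) • B = (l - m) • A + (1 : ℝ) • K := by
    rw [one_smul, ← add_assoc, ← hA.add_smul (sub_nonneg.2 hml) hm, sub_add_cancel]
  have hmK : m • A + (1 - m) • B = (l - m) • B + (1 : ℝ) • K := by
    rw [one_smul, add_left_comm, ← hB.add_smul (sub_nonneg.2 hml) (sub_nonneg.2 hl)]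
    congr 3
    ring
  rw [comb, comb, hausdorffDist_closure, hlK, hmK]
  calc _ ≤ (l - m) * hausdorffDist A B + 1 * hausdorffDist K K :=
        hausdorffDist_smul_add_smul_le hAB (by simp) (sub_nonneg.2 hml) zero_le_one
    _ = (l - m) * hausdorffDist A B := by rw [hausdorffDist_self_zero, mul_zero, add_zero]

theorem hausdorffDist_comb_eq_of_le (hA : MemCB D A) (hB : MemCB D B) {l m : ℝ}
    (hm : 0 ≤ m) (hml : m ≤ l) (hl : l ≤ 1) :
    hausdorffDist (comb l A B) (comb m A B) = (l - m) * hausdorffDist A B := by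
  obtain ⟨hAne, hAb, hAcl, hAco, -⟩ := hA
  obtain ⟨hBne, hBb, hBcl, hBco, -⟩ := hB
  have hAB := hausdorffEDist_ne_top_of_nonempty_of_bounded hAne hBne hAb hBb
  have fin : ∀ k, hausdorffEDist A (comb k A B) ≠ ⊤ := fun k =>
    hausdorffEDist_ne_top_of_nonempty_of_bounded hAne (hAne.comb hBne k) hAb (hAb.comb hBb k)
  refine le_antisymm (hausdorffDist_comb_le_of_le hAco hBco hAB hm hml hl) ?_
  have hAl := hausdorffDist_comb_le_of_le hAco hBco hAB (hm.trans hml) hl le_rfl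
  have hmB := hausdorffDist_comb_le_of_le hAco hBco hAB le_rfl hm (hml.trans hl)
  rw [comb_one hAcl hBne] at hAl
  rw [comb_zero hAne hBcl, sub_zero] at hmB
  have htri := calc hausdorffDist A B
      ≤ hausdorffDist A (comb m A B) + hausdorffDist (comb m A B) B :=
        hausdorffDist_triangle (fin m)
    _ ≤ hausdorffDist A (comb l A B) + hausdorffDist (comb l A B) (comb m A B) +
          hausdorffDist (comb m A B) B := by gcongr; exact hausdorffDist_triangle (fin l)
  linarith

theorem hausdorffDist_comb_eq (hA : MemCB D A) (hB : MemCB D B) {l m : ℝ}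
    (hl : l ∈ Icc (0 : ℝ) 1) (hm : m ∈ Icc (0 : ℝ) 1) :
    hausdorffDist (comb l A B) (comb m A B) = |l - m| * hausdorffDist A B := by
  rcases le_total m l with h | h
  · rw [abs_of_nonneg (sub_nonneg.2 h)]
    exact hausdorffDist_comb_eq_of_le hA hB hm.1 h hl.2
  · rw [abs_of_nonpos (sub_nonpos.2 h), neg_sub, hausdorffDist_comm]
    exact hausdorffDist_comb_eq_of_le hA hB hl.1 h hm.2

theorem comb_comb (hA : Convex ℝ A) (hB : Convex ℝ B) {l m t : ℝ} (hl : l ∈ Icc (0 : ℝ) 1)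
    (hm : m ∈ Icc (0 : ℝ) 1) (ht : t ∈ Icc (0 : ℝ) 1) :
    comb t (comb l A B) (comb m A B) = comb (t * l + (1 - t) * m) A B := by
  have ht' : 0 ≤ 1 - t := sub_nonneg.2 ht.2
  have hA' : (t * l + (1 - t) * m) • A = (t * l) • A + ((1 - t) * m) • A :=
    hA.add_smul (mul_nonneg ht.1 hl.1) (mul_nonneg ht' hm.1)
  have hB' : (1 - (t * l + (1 - t) * m)) • B = (t * (1 - l)) • B + ((1 - t) * (1 - m)) • B := by
    rw [← hB.add_smul (mul_nonneg ht.1 (sub_nonneg.2 hl.2)) (mul_nonneg ht' (sub_nonneg.2 hm.2))]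
    congr 1
    ring
  rw [comb, comb, comb, ← closure_smul₀, ← closure_smul₀, closure_closure_add_closure, comb,
    hA', hB', smul_add, smul_add, smul_smul, smul_smul, smul_smul, smul_smul,
    add_add_add_comm]

theorem exists_memCB_tendsto_hausdorffDist [CompleteSpace X] (hDcl : IsClosed D)
    {f : ℕ → Set X} (hf : ∀ n, MemCB D (f n))
    (hc : ∀ ε > (0 : ℝ), ∃ N, ∀ m ≥ N, ∀ n ≥ N, hausdorffDist (f m) (f n) < ε) :
    ∃ L : Set X, MemCB D L ∧ Tendsto (fun n => hausdorffDist (f n) L) atTop (𝓝 0) := by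
  let F : ℕ → TopologicalSpace.Closeds X := fun n => ⟨f n, (hf n).2.2.1⟩
  obtain ⟨L, hL⟩ := cauchySeq_tendsto_of_complete <|
    TopologicalSpace.Closeds.cauchySeq_of_hausdorffDist (F := F)
      (fun m n => (hf m).hausdorffEDist_ne_top (hf n)) hc
  have hLe : Tendsto (fun n => hausdorffEDist (f n) L) atTop (𝓝 0) :=
    tendsto_iff_edist_tendsto_0.1 hL
  obtain ⟨n, hn⟩ := (hLe.eventually_ne ENNReal.zero_ne_top).exists
  refine ⟨L, ⟨nonempty_of_hausdorffEDist_ne_top (hf n).1 hn,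
    (hf n).2.1.of_hausdorffEDist_ne_top hn, L.isClosed,
    TopologicalSpace.Closeds.isClosed_setOf_convex.mem_of_tendsto hL
      (.of_forall fun n => (hf n).2.2.2.1),
    (TopologicalSpace.Closeds.isClosed_subsets_of_isClosed hDcl).mem_of_tendsto hL
      (.of_forall fun n => (hf n).2.2.2.2)⟩, ?_⟩
  exact ENNReal.toReal_zero ▸ (ENNReal.tendsto_toReal ENNReal.zero_ne_top).comp hLe

end Hyperspace

/-- The hyperspace `𝒞ℬ(D)` of nonempty bounded closed convex subsets of a closed convex set
`D` in a Banach space, with the Hausdorff distance and the metric segments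
`[A,B] = {λA + (1−λ)B : λ ∈ [0,1]}`, is a complete hyperbolic metric space: the Hausdorff
distance is a (finite) metric on it, it is complete, each `[A,B]` is a metric segment
(closed under forming subsegments), and the hyperbolicity inequality holds. -/
theorem CB_complete_hyperbolic {X : Type*} [NormedAddCommGroup X] [NormedSpace ℝ X]
    [CompleteSpace X] (D : Set X) (hDcl : IsClosed D) (hDco : Convex ℝ D) :
    -- the Hausdorff distance is a genuine metric on `𝒞ℬ(D)`
    (∀ A B : Set X, MemCB D A → MemCB D B →
      (hausdorffDist A B = 0 ↔ A = B)) ∧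
    -- completeness
    (∀ f : ℕ → Set X, (∀ n, MemCB D (f n)) →
      (∀ ε > (0 : ℝ), ∃ N, ∀ m ≥ N, ∀ n ≥ N, hausdorffDist (f m) (f n) < ε) →
      ∃ L : Set X, MemCB D L ∧
        Tendsto (fun n => hausdorffDist (f n) L) atTop (nhds 0)) ∧
    -- each `[A,B]` consists of members of `𝒞ℬ(D)` and is a metric segment
    (∀ A B : Set X, MemCB D A → MemCB D B →
      ∀ l ∈ Set.Icc (0 : ℝ) 1, MemCB D (comb l A B)) ∧
    (∀ A B : Set X, MemCB D A → MemCB D B →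
      ∀ l ∈ Set.Icc (0 : ℝ) 1, ∀ m ∈ Set.Icc (0 : ℝ) 1,
        hausdorffDist (comb l A B) (comb m A B) = |l - m| * hausdorffDist A B) ∧
    -- hyperbolicity: `ρ((1−t)x ⊕ ty, (1−t)w ⊕ tz) ≤ (1−t)ρ(x,w) + tρ(y,z)`
    (∀ A B W Z : Set X, MemCB D A → MemCB D B → MemCB D W → MemCB D Z →
      ∀ t ∈ Set.Icc (0 : ℝ) 1,
        hausdorffDist (comb (1 - t) A B) (comb (1 - t) W Z) ≤
          (1 - t) * hausdorffDist A W + t * hausdorffDist B Z) ∧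
    -- the family of segments is closed under subsegments
    (∀ A B : Set X, MemCB D A → MemCB D B →
      ∀ l ∈ Set.Icc (0 : ℝ) 1, ∀ m ∈ Set.Icc (0 : ℝ) 1, ∀ t ∈ Set.Icc (0 : ℝ) 1,
        ∃ s ∈ Set.Icc (0 : ℝ) 1,
          comb t (comb l A B) (comb m A B) = comb s A B) := by
  refine ⟨fun A B hA hB =>
      hA.2.2.1.hausdorffDist_zero_iff_eq hB.2.2.1 (hA.hausdorffEDist_ne_top hB),
    fun f hf hc => exists_memCB_tendsto_hausdorffDist hDcl hf hc,
    fun A B hA hB l hl => hA.comb hDcl hDco hB hl,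
    fun A B hA hB l hl m hm => hausdorffDist_comb_eq hA hB hl hm, ?_, ?_⟩
  · intro A B W Z hA hB hW hZ t ht
    simpa using hausdorffDist_comb_comb_le (hA.hausdorffEDist_ne_top hW)
      (hB.hausdorffEDist_ne_top hZ) (t := 1 - t) ⟨sub_nonneg.2 ht.2, sub_le_self 1 ht.1⟩
  · intro A B hA hB l hl m hm t ht
    exact ⟨t * l + (1 - t) * m, convex_Icc (0 : ℝ) 1 hl hm ht.1 (sub_nonneg.2 ht.2)
      (add_sub_cancel t 1), comb_comb hA.2.2.2.1 hB.2.2.2.1 hl hm ht⟩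
end

section
/- Let X be a Banach space and C ⊆ X a nonempty bounded closed convex subset. The set of strict contractions F : C → 𝒞𝒦(C) is dense in the complete metric space (ℳ, d∞) of all nonexpansive mappings G : C → 𝒞𝒦(C) with the metric of uniform convergence. -/
open Metric Set

variable {X : Type*} [NormedAddCommGroup X] [NormedSpace ℝ X]

/-- `F` maps `C` into the hyperspace `𝒞𝒦(C)` of nonempty convex compact subsets of `C`. -/
def MapsIntoCK (C : Set X) (F : X → Set X) : Prop :=
  ∀ x ∈ C, (F x).Nonempty ∧ IsCompact (F x) ∧ Convex ℝ (F x) ∧ F x ⊆ C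

/-!
Push every value of `G` towards a fixed `z ∈ C` by the homothety `v ↦ z + r • (v - z)`, `r < 1`.
The new values stay in `𝒞𝒦(C)` by convexity, Hausdorff distances between them shrink by the
factor `r`, and each point moves by at most `(1 - r) * diam C`, which is small for `r` near `1`.
-/
open scoped NNReal

section LipschitzImage

variable {α β : Type*}

theorem LipschitzWith.infEDist_image_le [PseudoEMetricSpace α] [PseudoEMetricSpace β]
    {K : ℝ≥0} {f : α → β} (hf : LipschitzWith K f) (x : α) {t : Set α} (ht : t.Nonempty) :
    infEDist (f x) (f '' t) ≤ K * infEDist x t := by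
  have : Nonempty t := ht.to_subtype
  simp only [infEDist, iInf_image, iInf_subtype']
  rw [ENNReal.mul_iInf (by simp)]
  exact iInf_mono fun y => hf x y

theorem LipschitzWith.hausdorffEDist_image_le [PseudoEMetricSpace α] [PseudoEMetricSpace β]
    {K : ℝ≥0} {f : α → β} (hf : LipschitzWith K f) {s t : Set α} (hs : s.Nonempty)
    (ht : t.Nonempty) :
    hausdorffEDist (f '' s) (f '' t) ≤ K * hausdorffEDist s t := by
  refine hausdorffEDist_le_of_infEDist ?_ ?_
  · rintro _ ⟨x, hx, rfl⟩
    calc infEDist (f x) (f '' t) ≤ K * infEDist x t := hf.infEDist_image_le x ht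
      _ ≤ K * hausdorffEDist s t := by gcongr; exact infEDist_le_hausdorffEDist_of_mem hx
  · rintro _ ⟨x, hx, rfl⟩
    calc infEDist (f x) (f '' s) ≤ K * infEDist x s := hf.infEDist_image_le x hs
      _ ≤ K * hausdorffEDist s t := by
        rw [hausdorffEDist_comm]; gcongr; exact infEDist_le_hausdorffEDist_of_mem hx

theorem LipschitzWith.hausdorffDist_image_le [PseudoMetricSpace α] [PseudoMetricSpace β]
    {K : ℝ≥0} {f : α → β} (hf : LipschitzWith K f) {s t : Set α} (hs : s.Nonempty)
    (ht : t.Nonempty) (hsb : Bornology.IsBounded s) (htb : Bornology.IsBounded t) :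
    hausdorffDist (f '' s) (f '' t) ≤ K * hausdorffDist s t := by
  rw [hausdorffDist, hausdorffDist, ← ENNReal.coe_toReal (r := K), ← ENNReal.toReal_mul]
  exact ENNReal.toReal_mono (ENNReal.mul_ne_top ENNReal.coe_ne_top
    (hausdorffEDist_ne_top_of_nonempty_of_bounded hs ht hsb htb)) (hf.hausdorffEDist_image_le hs ht)

theorem hausdorffDist_image_self_le_of_dist_le [PseudoMetricSpace α] {f : α → α} {s : Set α}
    {r : ℝ} (hr : 0 ≤ r) (h : ∀ x ∈ s, dist (f x) x ≤ r) : hausdorffDist (f '' s) s ≤ r :=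
  hausdorffDist_le_of_mem_dist hr (by rintro _ ⟨x, hx, rfl⟩; exact ⟨x, hx, h x hx⟩)
    fun x hx => ⟨f x, mem_image_of_mem f hx, dist_comm x (f x) ▸ h x hx⟩

end LipschitzImage

section Homothety

open AffineMap

theorem dist_homothety_homothety {𝕜 V P : Type*} [NormedField 𝕜] [SeminormedAddCommGroup V]
    [NormedSpace 𝕜 V] [PseudoMetricSpace P] [NormedAddTorsor V P] (c : P) (r : 𝕜) (p q : P) :
    dist (homothety c r p) (homothety c r q) = ‖r‖ * dist p q := by
  simp [homothety_apply, dist_eq_norm_vsub V, ← smul_sub, norm_smul]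

theorem lipschitzWith_homothety {𝕜 V P : Type*} [NormedField 𝕜] [SeminormedAddCommGroup V]
    [NormedSpace 𝕜 V] [PseudoMetricSpace P] [NormedAddTorsor V P] (c : P) (r : 𝕜) :
    LipschitzWith ‖r‖₊ (homothety c r) :=
  LipschitzWith.of_dist_le_mul fun p q => (dist_homothety_homothety c r p q).le

theorem hausdorffDist_homothety_image_self_le {C s : Set X} (hC : Bornology.IsBounded C)
    {z : X} (hz : z ∈ C) (hs : s ⊆ C) (r : ℝ) :
    hausdorffDist (homothety z r '' s) s ≤ ‖1 - r‖ * diam C :=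
  hausdorffDist_image_self_le_of_dist_le (by positivity) fun v hv => by
    rw [dist_homothety_self]
    gcongr
    exact dist_le_diam_of_mem hC hz (hs hv)

theorem MapsIntoCK.image_homothety {C : Set X} {G : X → Set X} (hG : MapsIntoCK C G)
    (hC : Convex ℝ C) {z : X} (hz : z ∈ C) {r : ℝ} (hr : r ∈ Icc 0 1) :
    MapsIntoCK C fun x => homothety z r '' G x := by
  intro x hx
  obtain ⟨hne, hcpt, hconv, hsub⟩ := hG x hx
  refine ⟨hne.image _, hcpt.image (homothety_continuous z r), hconv.affine_image _, ?_⟩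
  rintro _ ⟨v, hv, rfl⟩
  rw [homothety_eq_lineMap]
  exact hC.lineMap_mem hz (hsub hv) hr

end Homothety

theorem strict_contractions_dense_general {X : Type*} [NormedAddCommGroup X] [NormedSpace ℝ X]
    (C : Set X) (hCne : C.Nonempty) (hCb : Bornology.IsBounded C)
    (hCco : Convex ℝ C)
    (G : X → Set X) (hG : MapsIntoCK C G)
    (hGne : ∀ x ∈ C, ∀ y ∈ C, hausdorffDist (G x) (G y) ≤ ‖x - y‖)
    (ε : ℝ) (hε : 0 < ε) :
    ∃ F : X → Set X, MapsIntoCK C F ∧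
      (∃ k : ℝ, 0 ≤ k ∧ k < 1 ∧
        ∀ x ∈ C, ∀ y ∈ C, hausdorffDist (F x) (F y) ≤ k * ‖x - y‖) ∧
      ∀ x ∈ C, hausdorffDist (F x) (G x) < ε := by
  obtain ⟨z, hz⟩ := hCne
  have hD : 0 ≤ diam C := diam_nonneg
  set r := diam C / (diam C + ε)
  have hr0 : 0 ≤ r := by positivity
  have hr1 : r < 1 := (div_lt_one (by positivity)).2 (by linarith)
  have hrε : (1 - r) * diam C < ε := by
    rw [one_sub_div (by positivity), add_sub_cancel_left, div_mul_eq_mul_div,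
      div_lt_iff₀ (by positivity)]
    nlinarith
  have hGb (x) (hx : x ∈ C) : Bornology.IsBounded (G x) := (hG x hx).2.1.isBounded
  refine ⟨fun x => AffineMap.homothety z r '' G x, hG.image_homothety hCco hz ⟨hr0, hr1.le⟩,
    ⟨r, hr0, hr1, fun x hx y hy => ?_⟩, fun x hx => ?_⟩
  · calc _ ≤ ‖r‖ * hausdorffDist (G x) (G y) :=
          (lipschitzWith_homothety z r).hausdorffDist_image_le (hG x hx).1 (hG y hy).1
            (hGb x hx) (hGb y hy)
      _ ≤ r * ‖x - y‖ := by rw [Real.norm_of_nonneg hr0]; gcongr; exact hGne x hx y hy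
  · calc _ ≤ ‖1 - r‖ * diam C := hausdorffDist_homothety_image_self_le hCb hz (hG x hx).2.2.2 r
      _ < ε := by rwa [Real.norm_of_nonneg (by linarith)]

/-- The strict contractions `F : C → 𝒞𝒦(C)` are dense in the space of nonexpansive mappings
`G : C → 𝒞𝒦(C)` with the metric of uniform convergence: for every nonexpansive `G` and every
`ε > 0` there is a strict contraction `F` with `d_∞(F, G) < ε`. -/
theorem strict_contractions_dense {X : Type*} [NormedAddCommGroup X] [NormedSpace ℝ X]
    [CompleteSpace X] (C : Set X) (hCne : C.Nonempty) (hCb : Bornology.IsBounded C)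
    (hCcl : IsClosed C) (hCco : Convex ℝ C)
    (G : X → Set X) (hG : MapsIntoCK C G)
    (hGne : ∀ x ∈ C, ∀ y ∈ C, hausdorffDist (G x) (G y) ≤ ‖x - y‖)
    (ε : ℝ) (hε : 0 < ε) :
    ∃ F : X → Set X, MapsIntoCK C F ∧
      (∃ k : ℝ, 0 ≤ k ∧ k < 1 ∧
        ∀ x ∈ C, ∀ y ∈ C, hausdorffDist (F x) (F y) ≤ k * ‖x - y‖) ∧
      ∀ x ∈ C, hausdorffDist (F x) (G x) < ε :=
  strict_contractions_dense_general C hCne hCb hCco G hG hGne ε hε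
end

section
/- Let X be a Banach space and C ⊆ X a rotund weakly compact convex set. Then for every x ∈ X there exists a unique point z ∈ C with ‖x − z‖ = d(x, C), i.e. the metric projection onto C is single-valued. -/
/-!
Closed balls are convex and norm-closed, hence weakly closed, so `z ↦ ‖x - z‖` is weakly lower
semicontinuous and attains its infimum on the weakly compact set `C`. If `d = infDist x C > 0`,
Hahn–Banach separates the open ball `ball x d` from `C` by a functional `f ≠ 0`; every nearest
point lies in the closed ball, the closure of the open one, so it lies on the supporting
hyperplane `f = u`, which meets the rotund set `C` in a single point.
-/

open Metric Set

/-- A convex set `C` is rotund if every hyperplane supporting `C` at a point `z ∈ C` meets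
`C` only in `z`. -/
def Rotund {X : Type*} [NormedAddCommGroup X] [NormedSpace ℝ X] (C : Set X) : Prop :=
  ∀ z ∈ C, ∀ f : X →L[ℝ] ℝ, f ≠ 0 → ∀ r : ℝ, f z = r →
    ((∀ x ∈ C, f x ≤ r) ∨ (∀ x ∈ C, r ≤ f x)) → {x ∈ C | f x = r} = {z}

section

variable {X : Type*} [NormedAddCommGroup X] [NormedSpace ℝ X]

theorem lowerSemicontinuous_norm_sub_toWeakSpace_symm (x : X) :
    LowerSemicontinuous fun w : WeakSpace ℝ X => ‖x - (toWeakSpace ℝ X).symm w‖ := by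
  refine lowerSemicontinuous_iff_isClosed_preimage.2 fun r => ?_
  have hball : (fun w => ‖x - (toWeakSpace ℝ X).symm w‖) ⁻¹' Iic r =
      toWeakSpace ℝ X '' closedBall x r := by
    ext w
    simp [(toWeakSpace ℝ X).image_eq_preimage_symm, dist_eq_norm']
  rw [hball, ← isClosed_closedBall.closure_eq, (convex_closedBall x r).toWeakSpace_closure ℝ]
  exact isClosed_closure

theorem exists_norm_sub_eq_infDist_of_isCompact_toWeakSpace_image {C : Set X}
    (hne : C.Nonempty) (hC : IsCompact (toWeakSpace ℝ X '' C)) (x : X) :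
    ∃ z ∈ C, ‖x - z‖ = infDist x C := by
  obtain ⟨_, ⟨z, hz, rfl⟩, hmin⟩ :=
    ((lowerSemicontinuous_norm_sub_toWeakSpace_symm x).lowerSemicontinuousOn _).exists_isMinOn
      (hne.image _) hC
  refine ⟨z, hz, le_antisymm ((le_infDist hne).2 fun y hy => ?_) ?_⟩
  · simpa [dist_eq_norm] using hmin (mem_image_of_mem _ hy)
  · simpa [dist_eq_norm] using infDist_le_dist_of_mem (x := x) hz

theorem Convex.exists_dual_separating_closedBall_infDist {C : Set X} (hC : Convex ℝ C)
    (hne : C.Nonempty) {x : X} (hx : 0 < infDist x C) :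
    ∃ f : X →L[ℝ] ℝ, f ≠ 0 ∧ ∃ u : ℝ,
      (∀ y ∈ closedBall x (infDist x C), f y ≤ u) ∧ ∀ y ∈ C, u ≤ f y := by
  obtain ⟨f, u, hlt, hle⟩ :=
    geometric_hahn_banach_open (convex_ball x _) isOpen_ball hC disjoint_ball_infDist
  refine ⟨f, ?_, u, fun y hy => ?_, hle⟩
  · rintro rfl
    obtain ⟨c, hc⟩ := hne
    have hx₀ := hlt x (mem_ball_self hx)
    have hc₀ := hle c hc
    simp only [zero_apply] at hx₀ hc₀
    linarith
  · rw [← closure_ball x hx.ne'] at hy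
    exact closure_minimal (fun y hy => (hlt y hy).le) (isClosed_le f.continuous continuous_const) hy

theorem Rotund.eq_of_apply_eq_of_le {C : Set X} (hC : Rotund C) {f : X →L[ℝ] ℝ} (hf : f ≠ 0)
    {u : ℝ} (hu : ∀ y ∈ C, u ≤ f y) {z₁ z₂ : X} (h₁ : z₁ ∈ C) (h₂ : z₂ ∈ C) (hf₁ : f z₁ = u)
    (hf₂ : f z₂ = u) : z₁ = z₂ := by
  have h : z₂ ∈ {y ∈ C | f y = u} := ⟨h₂, hf₂⟩
  rw [hC z₁ h₁ f hf u hf₁ (Or.inr hu)] at h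
  exact h.symm

theorem Rotund.eq_of_norm_sub_eq_infDist {C : Set X} (hCco : Convex ℝ C) (hCrot : Rotund C)
    {x z₁ z₂ : X} (h₁C : z₁ ∈ C) (h₂C : z₂ ∈ C) (h₁ : ‖x - z₁‖ = infDist x C)
    (h₂ : ‖x - z₂‖ = infDist x C) : z₁ = z₂ := by
  rcases (infDist_nonneg (x := x) (s := C)).eq_or_lt with hd | hd
  · rw [← hd, norm_sub_eq_zero_iff] at h₁ h₂
    exact h₁.symm.trans h₂
  obtain ⟨f, hf, u, hball, hC⟩ := hCco.exists_dual_separating_closedBall_infDist ⟨z₁, h₁C⟩ hd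
  have hsupp : ∀ z ∈ C, ‖x - z‖ = infDist x C → f z = u := fun z hz hzd =>
    (hball z (by rw [mem_closedBall, dist_comm, dist_eq_norm, hzd])).antisymm (hC z hz)
  exact hCrot.eq_of_apply_eq_of_le hf hC h₁C h₂C (hsupp z₁ h₁C h₁) (hsupp z₂ h₂C h₂)

end

theorem rotund_unique_nearest_general {X : Type*} [NormedAddCommGroup X] [NormedSpace ℝ X]
    (C : Set X) (hCne : C.Nonempty) (hCco : Convex ℝ C)
    (hCwc : IsCompact (toWeakSpace ℝ X '' C : Set (WeakSpace ℝ X)))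
    (hCrot : Rotund C) (x : X) :
    ∃! z, z ∈ C ∧ ‖x - z‖ = infDist x C := by
  obtain ⟨z, hz, hzd⟩ := exists_norm_sub_eq_infDist_of_isCompact_toWeakSpace_image hCne hCwc x
  exact ⟨z, ⟨hz, hzd⟩, fun y hy => hCrot.eq_of_norm_sub_eq_infDist hCco hy.1 hz hy.2 hzd⟩

/-- For a nonempty rotund weakly compact convex set `C` in a Banach space and any `x ∈ X`
there is a unique point of `C` nearest to `x`. -/
theorem rotund_unique_nearest {X : Type*} [NormedAddCommGroup X] [NormedSpace ℝ X]
    [CompleteSpace X] (C : Set X) (hCne : C.Nonempty) (hCco : Convex ℝ C)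
    (hCwc : IsCompact (toWeakSpace ℝ X '' C : Set (WeakSpace ℝ X)))
    (hCrot : Rotund C) (x : X) :
    ∃! z, z ∈ C ∧ ‖x - z‖ = infDist x C :=
  rotund_unique_nearest_general C hCne hCco hCwc hCrot x
end

section
/- Let X be a Banach space, (C_k) a sequence of nonempty convex compact subsets of X converging in Hausdorff distance to a rotund compact convex set C, and (x_k) a sequence in X converging to x ∈ X. If z_k ∈ C_k satisfies ‖x_k − z_k‖ = d(x_k, C_k) for each k, then z_k → P_C x, the unique nearest point of C to x. -/
open Metric Set Filter

/-- Uniqueness of the nearest point in a rotund convex set. -/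
lemma rotund_nearest_unique {X : Type*} [NormedAddCommGroup X] [NormedSpace ℝ X]
    (C : Set X) (hCne : C.Nonempty) (hCco : Convex ℝ C) (hCrot : Rotund C)
    (x : X) (p : X) (hp : p ∈ C) (hpx : ‖x - p‖ = infDist x C)
    (q : X) (hq : q ∈ C) (hqx : ‖x - q‖ = infDist x C) : q = p := by
  set d := infDist x C with hd
  rcases eq_or_lt_of_le (infDist_nonneg (s := C) (x := x)) with h0 | hdpos
  · have hp0 : x = p := by
      have : ‖x - p‖ = 0 := by rw [hpx]; exact h0.symm
      have := norm_eq_zero.1 this; rw [sub_eq_zero] at this; exact this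
    have hq0 : x = q := by
      have : ‖x - q‖ = 0 := by rw [hqx]; exact h0.symm
      have := norm_eq_zero.1 this; rw [sub_eq_zero] at this; exact this
    rw [← hp0, ← hq0]
  · -- separate the open ball from C
    have hdisj : Disjoint (ball x d) C := by
      rw [Set.disjoint_left]
      intro a ha haC
      have : d ≤ dist x a := infDist_le_dist_of_mem haC
      rw [mem_ball, dist_comm] at ha
      exact absurd (lt_of_lt_of_le ha this) (lt_irrefl _)
    obtain ⟨f, u, hfb, hfC⟩ :=
      geometric_hahn_banach_open (convex_ball x d) isOpen_ball hCco hdisj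
    have hf0 : f ≠ 0 := by
      intro h
      have h1 : f x < u := hfb x (mem_ball_self hdpos)
      have h2 : u ≤ f p := hfC p hp
      rw [h] at h1 h2
      simp at h1 h2
      linarith
    have hclos : ∀ y : X, ‖x - y‖ = d → f y ≤ u := by
      intro y hy
      have hyc : y ∈ closure (ball x d) := by
        rw [closure_ball x (ne_of_gt hdpos), mem_closedBall, dist_comm, dist_eq_norm]
        exact le_of_eq hy
      have hsub : closure (ball x d) ⊆ f ⁻¹' Iic u :=
        closure_minimal (fun a ha => le_of_lt (hfb a ha))
          (IsClosed.preimage f.continuous isClosed_Iic)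
      exact hsub hyc
    have hfp : f p = u := le_antisymm (hclos p hpx) (hfC p hp)
    have hfq : f q = u := le_antisymm (hclos q hqx) (hfC q hq)
    have key := hCrot p hp f hf0 u hfp (Or.inr hfC)
    have : q ∈ {y ∈ C | f y = u} := ⟨hq, hfq⟩
    rw [key] at this
    exact this

/-- If nonempty convex compact sets `C_k` converge in Hausdorff distance to a nonempty rotund
compact convex set `C`, `x_k → x`, and `z_k ∈ C_k` is a nearest point of `C_k` to `x_k`, then
`z_k` converges to the unique nearest point `P_C x` of `C` to `x`. -/
theorem nearest_points_tendsto {X : Type*} [NormedAddCommGroup X] [NormedSpace ℝ X]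
    [CompleteSpace X]
    (C : Set X) (hCne : C.Nonempty) (hCcp : IsCompact C) (hCco : Convex ℝ C)
    (hCrot : Rotund C)
    (Ck : ℕ → Set X) (hCkne : ∀ k, (Ck k).Nonempty) (hCkcp : ∀ k, IsCompact (Ck k))
    (hCkco : ∀ k, Convex ℝ (Ck k))
    (hconv : Tendsto (fun k => hausdorffDist (Ck k) C) atTop (nhds 0))
    (x : X) (xk : ℕ → X) (hx : Tendsto xk atTop (nhds x))
    (zk : ℕ → X) (hzk : ∀ k, zk k ∈ Ck k ∧ ‖xk k - zk k‖ = infDist (xk k) (Ck k))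
    (p : X) (hp : p ∈ C) (hpx : ‖x - p‖ = infDist x C) :
    Tendsto zk atTop (nhds p) := by
  have huniq : ∀ q ∈ C, ‖x - q‖ = infDist x C → q = p := fun q hq hqx =>
    rotund_nearest_unique C hCne hCco hCrot x p hp hpx q hq hqx
  set d := infDist x C with hd
  have hedist : ∀ k, EMetric.hausdorffEdist (Ck k) C ≠ ⊤ := fun k =>
    hausdorffEdist_ne_top_of_nonempty_of_bounded (hCkne k) hCne
      (hCkcp k).isBounded hCcp.isBounded
  -- nearest points in C to zk
  choose w hwC hwd using fun k => hCcp.exists_infDist_eq_dist hCne (zk k)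
  have hzw : ∀ k, dist (zk k) (w k) ≤ hausdorffDist (Ck k) C := by
    intro k
    rw [← hwd k]
    exact infDist_le_hausdorffDist_of_mem (hzk k).1 (hedist k)
  have hzw0 : Tendsto (fun k => dist (zk k) (w k)) atTop (nhds 0) :=
    squeeze_zero (fun k => dist_nonneg) hzw hconv
  -- dist xk x → 0
  have hxx : Tendsto (fun k => dist (xk k) x) atTop (nhds 0) :=
    (tendsto_iff_dist_tendsto_zero).1 hx
  -- upper bound for ‖x - w k‖
  have hub : ∀ k, ‖x - w k‖ ≤
      d + 2 * dist (xk k) x + hausdorffDist (Ck k) C + dist (zk k) (w k) := by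
    intro k
    have h1 : ‖x - w k‖ ≤ dist x (xk k) + ‖xk k - zk k‖ + dist (zk k) (w k) := by
      have := dist_triangle4 x (xk k) (zk k) (w k)
      simpa [dist_eq_norm] using this
    have h2 : infDist (xk k) (Ck k) ≤ infDist (xk k) C + hausdorffDist C (Ck k) :=
      infDist_le_infDist_add_hausdorffDist (by rw [EMetric.hausdorffEdist_comm]; exact hedist k)
    have h3 : infDist (xk k) C ≤ infDist x C + dist (xk k) x :=
      infDist_le_infDist_add_dist
    have h4 : hausdorffDist C (Ck k) = hausdorffDist (Ck k) C := hausdorffDist_comm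
    have h5 := (hzk k).2
    rw [dist_comm x (xk k)] at h1
    rw [h4] at h2
    calc ‖x - w k‖ ≤ dist (xk k) x + ‖xk k - zk k‖ + dist (zk k) (w k) := h1
      _ ≤ dist (xk k) x + (d + dist (xk k) x + hausdorffDist (Ck k) C) + dist (zk k) (w k) := by
          rw [h5]; linarith
      _ = d + 2 * dist (xk k) x + hausdorffDist (Ck k) C + dist (zk k) (w k) := by ring
  have hlb : ∀ k, d ≤ ‖x - w k‖ := by
    intro k
    rw [← dist_eq_norm]
    exact infDist_le_dist_of_mem (hwC k)
  have hwx : Tendsto (fun k => ‖x - w k‖) atTop (nhds d) := by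
    have hU : Tendsto (fun k => d + 2 * dist (xk k) x + hausdorffDist (Ck k) C
        + dist (zk k) (w k)) atTop (nhds d) := by
      have : Tendsto (fun k => d + 2 * dist (xk k) x + hausdorffDist (Ck k) C
          + dist (zk k) (w k)) atTop (nhds (d + 2 * 0 + 0 + 0)) :=
        (((tendsto_const_nhds.add (hxx.const_mul 2)).add hconv).add hzw0)
      simpa using this
    exact tendsto_of_tendsto_of_tendsto_of_le_of_le tendsto_const_nhds hU hlb hub
  have hwp : Tendsto w atTop (nhds p) := by
    by_contra hcon
    rw [Metric.tendsto_atTop] at hcon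
    push_neg at hcon
    obtain ⟨ε, hε, hfreq⟩ := hcon
    obtain ⟨φ, hφ, hφε⟩ := extraction_of_frequently_atTop
      (frequently_atTop.2 (fun N => by
        obtain ⟨n, hn, h⟩ := hfreq N; exact ⟨n, hn, h⟩))
    obtain ⟨z, hzC, ψ, hψ, hlim⟩ := hCcp.tendsto_subseq (fun n => hwC (φ n))
    have hsub : Tendsto (fun n => ‖x - w (φ (ψ n))‖) atTop (nhds d) :=
      hwx.comp ((hφ.comp hψ).tendsto_atTop)
    have hnorm : Tendsto (fun n => ‖x - w (φ (ψ n))‖) atTop (nhds ‖x - z‖) :=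
      (tendsto_const_nhds.sub hlim).norm
    have hzd : ‖x - z‖ = d := tendsto_nhds_unique hnorm hsub
    have hzp : z = p := huniq z hzC hzd
    have hdist : Tendsto (fun n => dist (w (φ (ψ n))) p) atTop (nhds 0) := by
      rw [← hzp]
      exact (tendsto_iff_dist_tendsto_zero).1 hlim
    have : ∀ n, ε ≤ dist (w (φ (ψ n))) p := fun n => hφε (ψ n)
    have := ge_of_tendsto hdist (Eventually.of_forall this)
    linarith
  -- finally zk → p
  have : Tendsto (fun k => dist (zk k) p) atTop (nhds 0) := by
    have hb : ∀ k, dist (zk k) p ≤ dist (zk k) (w k) + dist (w k) p := fun k =>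
      dist_triangle _ _ _
    have : Tendsto (fun k => dist (zk k) (w k) + dist (w k) p) atTop (nhds (0 + 0)) :=
      hzw0.add ((tendsto_iff_dist_tendsto_zero).1 hwp)
    rw [add_zero] at this
    exact squeeze_zero (fun k => dist_nonneg) hb this
  exact tendsto_iff_dist_tendsto_zero.2 this
end

section
/- Let X be a Banach space, C ⊆ X a convex set containing the origin, and 0 < r < R. There exists a mapping Φ : C → C such that Φ(x) = 0 for all x ∈ C ∩ B̄(0, r), Φ(x) = x for all x ∈ C ∖ B(0, R), Lip Φ ≤ 1 + r/(R − r), and ‖Φ(x) − x‖ ≤ r for all x ∈ C. -/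
/-! The map is `Φ x = (ρ ‖x‖ / ‖x‖) • x` for the profile `ρ t = min t (k (t - r)⁺)` with slope
`k = 1 + r / (R - r) = R / (R - r)`: it vanishes on `[0, r]` and, since the ramp `k (t - r)` reaches
the diagonal exactly at `t = R`, is the identity on `[R, ∞)`. As `0 ≤ ρ t ≤ t`, `Φ x` lies on the
segment `[0, x] ⊆ C`. For `‖x‖ ≤ ‖y‖` the radial factors `a ≤ b` of `x` and `y` are ordered because
`ρ t / t` is nondecreasing, and `Φ x - Φ y = a • (x - y) - (b - a) • y`; the `k`-Lipschitz bound on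
`ρ` turns `(b - a) ‖y‖` into `(k - a) (‖y‖ - ‖x‖) ≤ (k - a) ‖x - y‖`, so
`‖Φ x - Φ y‖ ≤ k ‖x - y‖`. -/

open Set

def radialProfile (r k t : ℝ) : ℝ := min t (k * max 0 (t - r))

section radialProfile

variable {r k t : ℝ}

lemma radialProfile_eq_zero (ht : 0 ≤ t) (htr : t ≤ r) : radialProfile r k t = 0 := by
  simp [radialProfile, max_eq_left (sub_nonpos.2 htr), ht]

lemma radialProfile_eq_self (hk : 0 ≤ k) (h : t ≤ k * (t - r)) : radialProfile r k t = t :=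
  min_eq_left (h.trans (mul_le_mul_of_nonneg_left (le_max_right _ _) hk))

lemma radialProfile_mem_Icc (hk : 0 ≤ k) (ht : 0 ≤ t) : radialProfile r k t ∈ Icc 0 t :=
  ⟨le_min ht (by positivity), min_le_left _ _⟩

lemma sub_le_radialProfile (hr : 0 ≤ r) (hk : 1 ≤ k) : t - r ≤ radialProfile r k t := by
  refine le_min (by linarith) ?_
  calc t - r ≤ max 0 (t - r) := le_max_right _ _
    _ ≤ k * max 0 (t - r) := le_mul_of_one_le_left (le_max_left _ _) hk

lemma radialProfile_sub_radialProfile_le (hk : 1 ≤ k) {s : ℝ} (hst : s ≤ t) :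
    radialProfile r k t - radialProfile r k s ≤ k * (t - s) := by
  have hramp : k * max 0 (t - r) ≤ k * max 0 (s - r) + k * (t - s) := by
    have := max_sub_max_le_max 0 (t - r) 0 (s - r)
    rw [sub_self, sub_sub_sub_cancel_right, max_eq_right (sub_nonneg.2 hst)] at this
    rw [← mul_add]
    gcongr
    linarith
  have hid : t ≤ s + k * (t - s) := by nlinarith [mul_le_mul_of_nonneg_right hk (sub_nonneg.2 hst)]
  have := min_le_min hid hramp
  rw [min_add_add_right] at this
  exact sub_le_iff_le_add'.2 this

lemma monotoneOn_radialProfile_div (hr : 0 ≤ r) (hk : 0 ≤ k) :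
    MonotoneOn (fun t => radialProfile r k t / t) (Ici 0) := by
  intro s hs t ht hst
  rcases (mem_Ici.1 hs).eq_or_lt with rfl | hs
  · simpa using div_nonneg (radialProfile_mem_Icc hk ht).1 ht
  rw [div_le_div_iff₀ hs (hs.trans_le hst), radialProfile, radialProfile,
    min_mul_of_nonneg _ _ (hs.le.trans hst), min_mul_of_nonneg _ _ hs.le, mul_comm s t,
    mul_assoc, mul_assoc]
  gcongr min _ (k * ?_)
  rw [max_mul_of_nonneg _ _ (hs.le.trans hst), max_mul_of_nonneg _ _ hs.le, zero_mul, zero_mul]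
  exact max_le_max le_rfl (by nlinarith)

end radialProfile

section radialMap

variable {ρ : ℝ → ℝ}

lemma div_mem_Icc_zero_one (hρ : ∀ t, 0 ≤ t → ρ t ∈ Icc 0 t) {t : ℝ} (ht : 0 ≤ t) :
    ρ t / t ∈ Icc 0 1 :=
  ⟨div_nonneg (hρ t ht).1 ht, div_le_one_of_le₀ (hρ t ht).2 ht⟩

lemma div_mul_cancel_of_mem_Icc (hρ : ∀ t, 0 ≤ t → ρ t ∈ Icc 0 t) (t : ℝ) :
    ρ t / t * t = ρ t :=
  div_mul_cancel_of_imp fun h => by simpa [h] using hρ 0 le_rfl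

variable {X : Type*} [NormedAddCommGroup X] [NormedSpace ℝ X]

noncomputable def radialMap (ρ : ℝ → ℝ) (x : X) : X := (ρ ‖x‖ / ‖x‖) • x

variable {x y : X}

lemma radialMap_mem {C : Set X} (hC : Convex ℝ C) (h0 : (0 : X) ∈ C)
    (hρ : ∀ t, 0 ≤ t → ρ t ∈ Icc 0 t) (hx : x ∈ C) : radialMap ρ x ∈ C :=
  hC.smul_mem_of_zero_mem h0 hx (div_mem_Icc_zero_one hρ (norm_nonneg x))

lemma radialMap_eq_zero (h : ρ ‖x‖ = 0) : radialMap ρ x = 0 := by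
  simp [radialMap, h]

lemma radialMap_eq_self (h : ρ ‖x‖ = ‖x‖) : radialMap ρ x = x := by
  rcases eq_or_ne x 0 with rfl | hx
  · simp [radialMap]
  · simp [radialMap, h, div_self (norm_ne_zero_iff.2 hx)]

lemma norm_radialMap_sub_self (hρ : ∀ t, 0 ≤ t → ρ t ∈ Icc 0 t) (x : X) :
    ‖radialMap ρ x - x‖ = ‖x‖ - ρ ‖x‖ := by
  have hsplit : radialMap ρ x - x = (ρ ‖x‖ / ‖x‖ - 1) • x := by
    rw [radialMap, sub_smul, one_smul]
  have hle := (div_mem_Icc_zero_one hρ (norm_nonneg x)).2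
  rw [hsplit, norm_smul, Real.norm_eq_abs, abs_of_nonpos (sub_nonpos.2 hle), neg_sub, sub_mul,
    one_mul, div_mul_cancel_of_mem_Icc hρ]

lemma norm_radialMap_sub_radialMap_le_of_norm_le {L : ℝ} (hρ : ∀ t, 0 ≤ t → ρ t ∈ Icc 0 t)
    (hmono : MonotoneOn (fun t => ρ t / t) (Ici 0))
    (hlip : ∀ s t, 0 ≤ s → s ≤ t → ρ t - ρ s ≤ L * (t - s)) (hL : 1 ≤ L)
    (hxy : ‖x‖ ≤ ‖y‖) : ‖radialMap ρ x - radialMap ρ y‖ ≤ L * ‖x - y‖ := by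
  set a := ρ ‖x‖ / ‖x‖
  set b := ρ ‖y‖ / ‖y‖
  have ha := div_mem_Icc_zero_one hρ (norm_nonneg x)
  have hab : a ≤ b := hmono (norm_nonneg x) (norm_nonneg y) hxy
  have hsplit : radialMap ρ x - radialMap ρ y = a • (x - y) - (b - a) • y := by
    simp only [radialMap, smul_sub, sub_smul]
    abel
  have hgrowth : (b - a) * ‖y‖ ≤ (L - a) * (‖y‖ - ‖x‖) := by
    have := hlip _ _ (norm_nonneg x) hxy
    rw [← div_mul_cancel_of_mem_Icc hρ ‖x‖, ← div_mul_cancel_of_mem_Icc hρ ‖y‖] at this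
    linarith
  calc ‖radialMap ρ x - radialMap ρ y‖ ≤ a * ‖x - y‖ + (b - a) * ‖y‖ := by
        rw [hsplit]
        refine (norm_sub_le _ _).trans_eq ?_
        rw [norm_smul, norm_smul, Real.norm_of_nonneg ha.1, Real.norm_of_nonneg (sub_nonneg.2 hab)]
    _ ≤ a * ‖x - y‖ + (L - a) * ‖x - y‖ := by
        gcongr a * ‖x - y‖ + ?_
        refine hgrowth.trans (mul_le_mul_of_nonneg_left ?_ (by linarith [ha.2]))
        rw [norm_sub_rev]
        exact norm_sub_norm_le y x
    _ = L * ‖x - y‖ := by ring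

lemma norm_radialMap_sub_radialMap_le {L : ℝ} (hρ : ∀ t, 0 ≤ t → ρ t ∈ Icc 0 t)
    (hmono : MonotoneOn (fun t => ρ t / t) (Ici 0))
    (hlip : ∀ s t, 0 ≤ s → s ≤ t → ρ t - ρ s ≤ L * (t - s)) (hL : 1 ≤ L) (x y : X) :
    ‖radialMap ρ x - radialMap ρ y‖ ≤ L * ‖x - y‖ := by
  rcases le_total ‖x‖ ‖y‖ with hxy | hyx
  · exact norm_radialMap_sub_radialMap_le_of_norm_le hρ hmono hlip hL hxy
  · rw [norm_sub_rev, norm_sub_rev x]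
    exact norm_radialMap_sub_radialMap_le_of_norm_le hρ hmono hlip hL hyx

end radialMap

/-- Radial retraction lemma: for a convex set `C` containing the origin and `0 < r < R`,
there is `Φ : C → C` vanishing on `C ∩ B̄(0, r)`, equal to the identity on `C ∖ B(0, R)`,
Lipschitz with constant at most `1 + r/(R − r)` and satisfying `‖Φ(x) − x‖ ≤ r` on `C`. -/
theorem radial_retraction {X : Type*} [NormedAddCommGroup X] [NormedSpace ℝ X]
    (C : Set X) (hCco : Convex ℝ C) (h0C : (0 : X) ∈ C)
    (r R : ℝ) (hr : 0 < r) (hrR : r < R) :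
    ∃ Φ : X → X, (∀ x ∈ C, Φ x ∈ C) ∧
      (∀ x ∈ C ∩ Metric.closedBall (0 : X) r, Φ x = 0) ∧
      (∀ x ∈ C \ Metric.ball (0 : X) R, Φ x = x) ∧
      (∀ x ∈ C, ∀ y ∈ C, ‖Φ x - Φ y‖ ≤ (1 + r / (R - r)) * ‖x - y‖) ∧
      (∀ x ∈ C, ‖Φ x - x‖ ≤ r) := by
  set k := 1 + r / (R - r)
  have hRr : 0 < R - r := sub_pos.2 hrR
  have hk : 1 ≤ k := le_add_of_nonneg_right (div_nonneg hr.le hRr.le)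
  have hρ : ∀ t, 0 ≤ t → radialProfile r k t ∈ Icc 0 t := fun t =>
    radialProfile_mem_Icc (by linarith)
  have houter : ∀ t, R ≤ t → t ≤ k * (t - r) := by
    intro t ht
    have : k * (t - r) - t = r * (t - R) / (R - r) := by
      simp only [k]
      field_simp
      ring
    nlinarith [div_nonneg (mul_nonneg hr.le (sub_nonneg.2 ht)) hRr.le]
  refine ⟨radialMap (radialProfile r k), fun x hx => radialMap_mem hCco h0C hρ hx, ?_, ?_, ?_, ?_⟩
  · rintro x ⟨-, hx⟩
    exact radialMap_eq_zero (radialProfile_eq_zero (norm_nonneg x) (by simpa using hx))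
  · rintro x ⟨-, hx⟩
    exact radialMap_eq_self (radialProfile_eq_self (by linarith) (houter _ (by simpa using hx)))
  · intro x _ y _
    exact norm_radialMap_sub_radialMap_le hρ (monotoneOn_radialProfile_div hr.le (by linarith))
      (fun s t _ hst => radialProfile_sub_radialProfile_le hk hst) hk x y
  · intro x _
    rw [norm_radialMap_sub_self hρ]
    linarith [sub_le_radialProfile (t := ‖x‖) hr.le hk]
end
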